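/- Define T(n,k) by the recurrence T(n,0)=T(n,n)=1 and T(n,k)=2T(n-1,k-1)+T(n-1,k) for 0<k<n. Then for every fixed k ≥ 0, the generating function ∑_{n=0}^∞ T(n,n-k) x^n equals x^k / ((1-2x)^k (1-x)) as a formal power series. -/

import Mathlib

/-!
Write `A_k = ∑ₙ T(n, n-k) xⁿ`. Reading the recurrence along the `k`-th diagonal gives
`A_{k+1} (1 - 2x) = x A_k`, and `T(n, n) = 1` gives `A_0 (1 - x) = 1`; the theorem follows
by induction on `k`.
-/

/-- Sloane's A119258: `T n 0 = T n n = 1` and `T n k = 2 T (n-1) (k-1) + T (n-1) k`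
for `0 < k < n`, with `T n k = 0` for `k > n`. -/
def T : ℕ → ℕ → ℤ
  | _, 0 => 1
  | 0, _ + 1 => 0
  | n + 1, k + 1 =>
    if n + 1 ≤ k + 1 then (if k + 1 = n + 1 then 1 else 0)
    else 2 * T n k + T n (k + 1)

lemma T_zero_right (n : ℕ) : T n 0 = 1 := by cases n <;> rfl

lemma T_self (n : ℕ) : T n n = 1 := by cases n <;> simp [T]

lemma T_succ_succ {n k : ℕ} (h : k < n) : T (n + 1) (k + 1) = 2 * T n k + T n (k + 1) := by
  simp [T, Nat.not_le.mpr (Nat.succ_lt_succ h)]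

open PowerSeries

/-- The `if` guards against the truncated subtraction `n - k = 0` for `n < k`. -/
noncomputable def diagonalSeries (R : Type*) [CommRing R] (k : ℕ) : PowerSeries R :=
  PowerSeries.mk fun n => if n < k then 0 else (T n (n - k) : R)

variable {R : Type*} [CommRing R]

lemma diagonalSeries_zero_mul_one_sub_X : diagonalSeries R 0 * (1 - X) = 1 := by
  ext n
  rcases n with _ | n
  · simp [diagonalSeries, T_zero_right]
  · simp [diagonalSeries, mul_sub, coeff_succ_mul_X, T_self]

lemma diagonalSeries_succ_mul_one_sub_two_X (k : ℕ) :
    diagonalSeries R (k + 1) * (1 - 2 * X) = X * diagonalSeries R k := by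
  ext n
  rcases n with _ | n
  · simp [diagonalSeries]
  rw [mul_sub, mul_one, map_sub, ← map_ofNat C 2, mul_comm (C _), ← mul_assoc, coeff_mul_C,
    coeff_succ_mul_X, coeff_succ_X_mul]
  simp only [diagonalSeries, coeff_mk]
  rcases lt_trichotomy n k with h | rfl | h
  · simp [h, h.trans (Nat.lt_succ_self k)]
  · simp [T_zero_right]
  · have hsub : n + 1 - (k + 1) = n - (k + 1) + 1 := by omega
    rw [if_neg (by omega), if_neg (by omega), if_neg (by omega), hsub,
      T_succ_succ (by omega), show n - (k + 1) + 1 = n - k by omega]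
    push_cast
    ring

lemma diagonalSeries_mul (k : ℕ) :
    diagonalSeries R k * ((1 - 2 * X) ^ k * (1 - X)) = X ^ k := by
  induction k with
  | zero => simpa using diagonalSeries_zero_mul_one_sub_X
  | succ k ih =>
    calc diagonalSeries R (k + 1) * ((1 - 2 * X) ^ (k + 1) * (1 - X))
        = diagonalSeries R (k + 1) * (1 - 2 * X) * ((1 - 2 * X) ^ k * (1 - X)) := by ring
      _ = X * (diagonalSeries R k * ((1 - 2 * X) ^ k * (1 - X))) := by
        rw [diagonalSeries_succ_mul_one_sub_two_X]; ring
      _ = X ^ (k + 1) := by rw [ih]; ring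

open PowerSeries in
/-- The denominator of `x^k / ((1-2x)^k (1-x))` has constant term 1, so the quotient is
stated in product form. -/
theorem stmt2 (k : ℕ) :
    (PowerSeries.mk fun n => if n < k then (0 : ℚ) else (T n (n - k) : ℚ)) *
      ((1 - 2 * (X : PowerSeries ℚ)) ^ k * (1 - X)) = X ^ k :=
  diagonalSeries_mul k
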